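/- A pair of finite sequences of integers all ≥ 2 is complementary if and only if it can be obtained from the pair ((2), (2)) by finitely many moves of the following two types: replace ((a_1, …, a_m), (b_1, …, b_n)) by ((a_1, …, a_{m−1}, a_m + 1), (b_1, …, b_n, 2)), or replace it by ((a_1, …, a_m, 2), (b_1, …, b_{n−1}, b_n + 1)). (Equivalently: repeatedly blowing down the −1 in linear graphs of the form (−a_1, …, −a_m, −1, −b_n, …, −b_1) with (a), (b) complementary eventually reaches (−2, −1, −2).) -/

import Mathlib

/-!
Write `[a₁, …, aₙ]⁻ = p / q` with `(p, q)` the first column of `∏ !![aᵢ, -1; 1, 0]`, a matrix of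
determinant one. Reversing the sequence transposes this product up to a sign conjugation, so
`[aₙ, …, a₁]⁻ = p / p'` with `p' q ≡ 1 (mod p)`. Reduced fractions sum to one only as
`q / p + (p - q) / p`, and the inverse of `-q` modulo `p` is `p - p'`; hence `(a, b)` is
complementary iff the reversed pair is.

On reversed sequences the blow-up moves act on the first entries, and with `α = [x, …]⁻`,
`β = [b₁, …]⁻` they replace `α` by `α + 1` and `β` by `2 - 1 / β`, which preserves
`(α - 1)(β - 1) = 1`. Conversely, since `α ∈ (x - 1, x]` with equality only for `(x)`, this relation
forces one leading entry to be `2` and the other to be at least `3` unless both sequences are `(2)`,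
and then a blow-down yields a shorter complementary pair.
-/

/-- Negative continued fraction `[a₁, …, aₙ]⁻`. -/
def ncf : List ℚ → ℚ
  | [] => 0
  | [a] => a
  | a :: b :: l => a - 1 / ncf (b :: l)

/-- Negative continued fraction of a list of integers. -/
def ncfZ (l : List ℤ) : ℚ := ncf (l.map (fun x => (x : ℚ)))

/-- Two sequences of integers, all ≥ 2, are complementary if the reciprocals of their
negative continued fractions sum to 1. -/
def Complementary (a b : List ℤ) : Prop :=
  a ≠ [] ∧ b ≠ [] ∧ (∀ x ∈ a, 2 ≤ x) ∧ (∀ x ∈ b, 2 ≤ x) ∧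
    1 / ncfZ a + 1 / ncfZ b = 1

/-- The standard negative definite bilinear form on `ℤ^N`. -/
def negForm {N : ℕ} (x y : Fin N → ℤ) : ℤ := -∑ i, x i * y i

/-- Pairs of sequences obtainable from the pair ((2),(2)) by the two blow-up moves. -/
inductive BlowupPair : List ℤ → List ℤ → Prop
  | base : BlowupPair [2] [2]
  | left (a b : List ℤ) (ha : a ≠ []) (h : BlowupPair a b) :
      BlowupPair (a.dropLast ++ [a.getLast ha + 1]) (b ++ [2])
  | right (a b : List ℤ) (hb : b ≠ []) (h : BlowupPair a b) :
      BlowupPair (a ++ [2]) (b.dropLast ++ [b.getLast hb + 1])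

-- The matrix of the Möbius map `y ↦ x - 1 / y`.
def ncfStep (x : ℤ) : Matrix (Fin 2) (Fin 2) ℤ := !![x, -1; 1, 0]

def ncfMat (l : List ℤ) : Matrix (Fin 2) (Fin 2) ℤ := (l.map ncfStep).prod

@[simp] lemma ncfMat_nil : ncfMat [] = 1 := rfl

@[simp] lemma ncfMat_cons (x : ℤ) (l : List ℤ) : ncfMat (x :: l) = ncfStep x * ncfMat l := by
  simp [ncfMat]

lemma ncfMat_cons_zero_zero (x : ℤ) (l : List ℤ) :
    ncfMat (x :: l) 0 0 = x * ncfMat l 0 0 - ncfMat l 1 0 := by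
  simp [ncfStep, Matrix.mul_apply, Fin.sum_univ_two, sub_eq_add_neg]

lemma ncfMat_cons_one_zero (x : ℤ) (l : List ℤ) : ncfMat (x :: l) 1 0 = ncfMat l 0 0 := by
  simp [ncfStep, Matrix.mul_apply, Fin.sum_univ_two]

lemma ncfMat_concat (l : List ℤ) (x : ℤ) : ncfMat (l ++ [x]) = ncfMat l * ncfStep x := by
  simp [ncfMat]

lemma det_ncfMat (l : List ℤ) : (ncfMat l).det = 1 := by
  induction l with
  | nil => simp
  | cons x l ih => rw [ncfMat_cons, Matrix.det_mul, ih]; simp [ncfStep]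

lemma ncfMat_reverse (l : List ℤ) :
    ncfMat l.reverse = !![1, 0; 0, -1] * (ncfMat l).transpose * !![1, 0; 0, -1] := by
  have hD : !![(1 : ℤ), 0; 0, -1] * !![1, 0; 0, -1] = 1 := by
    simp [Matrix.one_fin_two]
  have hT (x : ℤ) : !![1, 0; 0, -1] * ncfStep x = (ncfStep x).transpose * !![1, 0; 0, -1] := by
    ext i j; fin_cases i <;> fin_cases j <;> simp [ncfStep, Matrix.mul_apply, Fin.sum_univ_two]
  induction l with
  | nil => simp [hD]
  | cons x l ih =>
    rw [List.reverse_cons, ncfMat_concat, ih, ncfMat_cons, Matrix.transpose_mul]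
    simp only [Matrix.mul_assoc, hT]

lemma ncfMat_reverse_zero_zero (l : List ℤ) : ncfMat l.reverse 0 0 = ncfMat l 0 0 := by
  simp only [ncfMat_reverse, Matrix.mul_apply, Fin.sum_univ_two, Matrix.transpose_apply]
  simp

lemma ncfMat_reverse_one_zero (l : List ℤ) : ncfMat l.reverse 1 0 = -ncfMat l 0 1 := by
  simp only [ncfMat_reverse, Matrix.mul_apply, Fin.sum_univ_two, Matrix.transpose_apply]
  simp

lemma ncfMat_bounds {l : List ℤ} (h : ∀ x ∈ l, 2 ≤ x) :
    0 ≤ ncfMat l 1 0 ∧ ncfMat l 1 0 < ncfMat l 0 0 := by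
  induction l with
  | nil => simp
  | cons x l ih =>
    obtain ⟨hx, hl⟩ := List.forall_mem_cons.1 h
    obtain ⟨hq, hqp⟩ := ih hl
    rw [ncfMat_cons_zero_zero, ncfMat_cons_one_zero]
    constructor <;> nlinarith

lemma ncfMat_one_zero_pos {l : List ℤ} (hl : l ≠ []) (h : ∀ x ∈ l, 2 ≤ x) :
    0 < ncfMat l 1 0 := by
  obtain ⟨x, l, rfl⟩ := List.exists_cons_of_ne_nil hl
  have := ncfMat_bounds (List.forall_mem_cons.1 h).2
  rw [ncfMat_cons_one_zero]
  omega

-- For `l = []` this holds because `1 / 0 = 0`.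
lemma ncf_cons (x : ℚ) (l : List ℚ) : ncf (x :: l) = x - 1 / ncf l := by
  cases l <;> simp [ncf]

lemma ncfZ_cons (x : ℤ) (l : List ℤ) : ncfZ (x :: l) = x - 1 / ncfZ l :=
  ncf_cons _ _

lemma ncfZ_eq_div {l : List ℤ} (h : ∀ x ∈ l, 2 ≤ x) :
    ncfZ l = ncfMat l 0 0 / ncfMat l 1 0 := by
  induction l with
  | nil => simp [ncfZ, ncf]
  | cons x l ih =>
    obtain ⟨hx, hl⟩ := List.forall_mem_cons.1 h
    have hp : (ncfMat l 0 0 : ℚ) ≠ 0 := by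
      have := ncfMat_bounds hl; exact_mod_cast (by omega : ncfMat l 0 0 ≠ 0)
    rw [ncfZ_cons, ih hl]
    rw [ncfMat_cons_zero_zero, ncfMat_cons_one_zero]
    push_cast
    field_simp

lemma one_lt_ncfZ {l : List ℤ} (hl : l ≠ []) (h : ∀ x ∈ l, 2 ≤ x) : 1 < ncfZ l := by
  have hq := ncfMat_one_zero_pos hl h
  have hqp := (ncfMat_bounds h).2
  rw [ncfZ_eq_div h, one_lt_div (by exact_mod_cast hq)]
  exact_mod_cast hqp

lemma ncfZ_cons_lt (x : ℤ) {l : List ℤ} (hl : l ≠ []) (h : ∀ z ∈ l, 2 ≤ z) :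
    ncfZ (x :: l) < x := by
  have := one_lt_ncfZ hl h
  rw [ncfZ_cons, sub_lt_self_iff]
  positivity

lemma ncfZ_cons_mem_Ioc (x : ℤ) {l : List ℤ} (h : ∀ z ∈ l, 2 ≤ z) :
    ncfZ (x :: l) ∈ Set.Ioc ((x : ℚ) - 1) x := by
  rcases eq_or_ne l [] with rfl | hl
  · simp [ncfZ, ncf]
  · have := one_lt_ncfZ hl h
    refine ⟨?_, (ncfZ_cons_lt x hl h).le⟩
    rw [ncfZ_cons, sub_lt_sub_iff_left, div_lt_one (by positivity)]
    exact this

lemma div_add_div_eq_one_iff {p q P Q : ℤ} (hp : 0 < p) (hP : 0 < P) (hpq : IsCoprime p q)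
    (hPQ : IsCoprime P Q) : (q / p + Q / P : ℚ) = 1 ↔ p = P ∧ q + Q = p := by
  constructor
  · intro h
    have hint : q * P + p * Q = p * P := by
      field_simp at h; exact_mod_cast h
    have hpP : p ∣ P := hpq.dvd_of_dvd_mul_left ⟨P - Q, by linear_combination hint⟩
    have hPp : P ∣ p := hPQ.dvd_of_dvd_mul_left ⟨p - q, by linear_combination hint⟩
    obtain rfl := Int.dvd_antisymm hp.le hP.le hpP hPp
    exact ⟨rfl, mul_right_cancel₀ hp.ne' (by linear_combination hint)⟩
  · rintro ⟨rfl, h⟩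
    rw [← add_div, div_eq_one_iff_eq (by positivity)]
    exact_mod_cast h

-- `u` and `U` are the inverses of `q` and `-q` modulo `p`, taken in `(0, p)`.
lemma add_eq_of_mul_add_mul_eq_one {p q u U s S : ℤ} (h : u * q + s * p = 1)
    (h' : U * (p - q) + S * p = 1) (hu : 0 < u) (hu' : u < p) (hU : 0 < U) (hU' : U < p) :
    u + U = p := by
  have hdvd : p ∣ u + U - p := by
    have hcop : IsCoprime p q := ⟨s, u, by linear_combination h⟩
    exact hcop.dvd_of_dvd_mul_left ⟨U - s + S - q, by linear_combination h - h'⟩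
  have := Int.eq_zero_of_abs_lt_dvd hdvd (abs_lt.2 ⟨by omega, by omega⟩)
  omega

lemma isCoprime_ncfMat (l : List ℤ) : IsCoprime (ncfMat l 0 0) (ncfMat l 1 0) := by
  refine ⟨ncfMat l 1 1, -ncfMat l 0 1, ?_⟩
  linear_combination (Matrix.det_fin_two _).symm.trans (det_ncfMat l)

lemma neg_ncfMat_zero_one_bounds {l : List ℤ} (hl : l ≠ []) (h : ∀ x ∈ l, 2 ≤ x) :
    0 < -ncfMat l 0 1 ∧ -ncfMat l 0 1 < ncfMat l 0 0 := by
  have h' : ∀ x ∈ l.reverse, 2 ≤ x := by simpa using h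
  have hpos := ncfMat_one_zero_pos (List.reverse_ne_nil_iff.2 hl) h'
  have hlt := (ncfMat_bounds h').2
  rw [ncfMat_reverse_zero_zero, ncfMat_reverse_one_zero] at hlt
  rw [ncfMat_reverse_one_zero] at hpos
  exact ⟨hpos, hlt⟩

lemma one_div_ncfZ_add_one_div_ncfZ_eq_one_iff {a b : List ℤ} (h2a : ∀ x ∈ a, 2 ≤ x)
    (h2b : ∀ x ∈ b, 2 ≤ x) :
    1 / ncfZ a + 1 / ncfZ b = 1 ↔
      ncfMat a 0 0 = ncfMat b 0 0 ∧ ncfMat a 1 0 + ncfMat b 1 0 = ncfMat a 0 0 := by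
  rw [ncfZ_eq_div h2a, ncfZ_eq_div h2b, one_div_div, one_div_div]
  have hpa := ncfMat_bounds h2a
  have hpb := ncfMat_bounds h2b
  exact div_add_div_eq_one_iff (by omega) (by omega) (isCoprime_ncfMat a) (isCoprime_ncfMat b)

lemma Complementary.reverse {a b : List ℤ} (h : Complementary a b) :
    Complementary a.reverse b.reverse := by
  obtain ⟨ha, hb, h2a, h2b, hab⟩ := h
  have h2a' : ∀ x ∈ a.reverse, 2 ≤ x := by simpa using h2a
  have h2b' : ∀ x ∈ b.reverse, 2 ≤ x := by simpa using h2b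
  refine ⟨by simpa using ha, by simpa using hb, h2a', h2b', ?_⟩
  rw [one_div_ncfZ_add_one_div_ncfZ_eq_one_iff h2a h2b] at hab
  rw [one_div_ncfZ_add_one_div_ncfZ_eq_one_iff h2a' h2b']
  simp only [ncfMat_reverse_zero_zero, ncfMat_reverse_one_zero]
  obtain ⟨hp, hq⟩ := hab
  refine ⟨hp, ?_⟩
  have hdeta := (Matrix.det_fin_two _).symm.trans (det_ncfMat a)
  have hdetb := (Matrix.det_fin_two _).symm.trans (det_ncfMat b)
  obtain ⟨hua, hua'⟩ := neg_ncfMat_zero_one_bounds ha h2a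
  obtain ⟨hub, hub'⟩ := neg_ncfMat_zero_one_bounds hb h2b
  exact add_eq_of_mul_add_mul_eq_one (q := ncfMat a 1 0) (s := ncfMat a 1 1) (S := ncfMat b 1 1)
    (by linear_combination hdeta)
    (by linear_combination hdetb + ncfMat b 0 1 * hq + ncfMat b 1 1 * hp)
    hua hua' hub (hp ▸ hub')

lemma Complementary.symm {a b : List ℤ} (h : Complementary a b) : Complementary b a :=
  ⟨h.2.1, h.1, h.2.2.2.1, h.2.2.1, by rw [add_comm]; exact h.2.2.2.2⟩

lemma Complementary.sub_one_mul_sub_one {a b : List ℤ} (h : Complementary a b) :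
    (ncfZ a - 1) * (ncfZ b - 1) = 1 := by
  obtain ⟨ha, hb, h2a, h2b, hab⟩ := h
  have := one_lt_ncfZ ha h2a
  have := one_lt_ncfZ hb h2b
  field_simp at hab
  linear_combination -hab

lemma complementary_succ_cons_two_cons_iff {x : ℤ} {a b : List ℤ} (hx : 2 ≤ x) (hb : b ≠ []) :
    Complementary ((x + 1) :: a) (2 :: b) ↔ Complementary (x :: a) b := by
  have key (h2a : ∀ z ∈ a, 2 ≤ z) (h2b : ∀ z ∈ b, 2 ≤ z) :
      1 / ncfZ ((x + 1) :: a) + 1 / ncfZ (2 :: b) = 1 ↔ 1 / ncfZ (x :: a) + 1 / ncfZ b = 1 := by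
    have hα := one_lt_ncfZ (List.cons_ne_nil x a) (List.forall_mem_cons.2 ⟨hx, h2a⟩)
    have hβ := one_lt_ncfZ hb h2b
    have hcons : ncfZ ((x + 1) :: a) = ncfZ (x :: a) + 1 := by
      simp only [ncfZ_cons]; push_cast; ring
    rw [hcons, ncfZ_cons 2]
    push_cast
    generalize ncfZ (x :: a) = α at hα ⊢
    generalize ncfZ b = β at hβ ⊢
    have : 2 * β - 1 ≠ 0 := by linarith
    rw [show (2 : ℚ) - 1 / β = (2 * β - 1) / β by field_simp]
    field_simp
    constructor <;> intro h <;> linarith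
  simp only [Complementary, List.forall_mem_cons, ne_eq, reduceCtorEq, not_false_eq_true,
    true_and, hb]
  exact ⟨fun ⟨⟨_, h2a⟩, ⟨_, h2b⟩, h⟩ => ⟨⟨hx, h2a⟩, h2b, (key h2a h2b).1 h⟩,
    fun ⟨⟨_, h2a⟩, h2b, h⟩ => ⟨⟨by omega, h2a⟩, ⟨le_rfl, h2b⟩, (key h2a h2b).2 h⟩⟩

lemma Complementary.exists_eq_two_cons {x : ℤ} {a b : List ℤ} (h : Complementary (x :: a) b)
    (hx : 3 ≤ x) : ∃ b', b = 2 :: b' ∧ b' ≠ [] := by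
  have hprod := h.sub_one_mul_sub_one
  obtain ⟨-, hb, h2a, h2b, -⟩ := h
  obtain ⟨y, b, rfl⟩ := List.exists_cons_of_ne_nil hb
  obtain ⟨hy, h2b⟩ := List.forall_mem_cons.1 h2b
  have hα := (ncfZ_cons_mem_Ioc x (List.forall_mem_cons.1 h2a).2).1
  have hβ := ncfZ_cons_mem_Ioc y h2b
  have hx' : (3 : ℚ) ≤ x := by exact_mod_cast hx
  have hβ2 : ncfZ (y :: b) < 2 := by nlinarith [hβ.1]
  have hy2 : y = 2 := by
    have : (y : ℚ) < 3 := by linarith [hβ.1]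
    have : y < 3 := by exact_mod_cast this
    omega
  subst hy2
  refine ⟨b, rfl, fun hb => ?_⟩
  subst hb
  simp [ncfZ, ncf] at hβ2

lemma Complementary.eq_nil_of_two_cons {a b : List ℤ} (h : Complementary (2 :: a) (2 :: b)) :
    a = [] ∧ b = [] := by
  have hprod := h.sub_one_mul_sub_one
  obtain ⟨-, -, h2a, h2b, -⟩ := h
  have h2a := (List.forall_mem_cons.1 h2a).2
  have h2b := (List.forall_mem_cons.1 h2b).2
  obtain ⟨hα, hα'⟩ := ncfZ_cons_mem_Ioc 2 h2a
  obtain ⟨hβ, hβ'⟩ := ncfZ_cons_mem_Ioc 2 h2b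
  norm_num at hα hα' hβ hβ'
  constructor <;> by_contra hne
  · have := ncfZ_cons_lt 2 hne h2a
    push_cast at this
    nlinarith
  · have := ncfZ_cons_lt 2 hne h2b
    push_cast at this
    nlinarith

lemma BlowupPair.symm {a b : List ℤ} (h : BlowupPair a b) : BlowupPair b a := by
  induction h with
  | base => exact .base
  | left a b ha _ ih => exact .right b a ha ih
  | right a b hb _ ih => exact .left b a hb ih

lemma BlowupPair.concat_succ {a b : List ℤ} {x : ℤ} (h : BlowupPair (a ++ [x]) b) :
    BlowupPair (a ++ [x + 1]) (b ++ [2]) := by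
  simpa using BlowupPair.left _ _ (by simp) h

lemma BlowupPair.complementary_reverse {a b : List ℤ} (h : BlowupPair a b) :
    Complementary a.reverse b.reverse := by
  induction h with
  | base => norm_num [Complementary, ncfZ, ncf]
  | left a b ha _ ih =>
    rw [← List.dropLast_append_getLast ha, List.reverse_concat'] at ih
    rw [List.reverse_concat', List.reverse_concat']
    exact (complementary_succ_cons_two_cons_iff (ih.2.2.1 _ List.mem_cons_self) ih.2.1).2 ih
  | right a b hb _ ih =>
    rw [← List.dropLast_append_getLast hb, List.reverse_concat'] at ih
    rw [List.reverse_concat', List.reverse_concat']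
    exact ((complementary_succ_cons_two_cons_iff (ih.2.2.2.1 _ List.mem_cons_self) ih.1).2
      ih.symm).symm

theorem Complementary.blowupPair_reverse {a b : List ℤ} (h : Complementary a b) :
    BlowupPair a.reverse b.reverse := by
  induction hn : a.length + b.length using Nat.strong_induction_on generalizing a b with
  | _ n ih =>
  obtain ⟨x, a, rfl⟩ := List.exists_cons_of_ne_nil h.1
  obtain ⟨y, b, rfl⟩ := List.exists_cons_of_ne_nil h.2.1
  wlog hyx : y ≤ x generalizing x y a b
  · exact (this y b x a h.symm (by simp at hn ⊢; omega) (by omega)).symm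
  obtain hx | hx := lt_or_ge 2 x
  · obtain ⟨b', hb, hb'⟩ := h.exists_eq_two_cons (by omega)
    obtain ⟨rfl, rfl⟩ := List.cons.inj hb
    obtain ⟨x, rfl⟩ : ∃ x', x = x' + 1 := ⟨x - 1, by ring⟩
    have h' := (complementary_succ_cons_two_cons_iff (by omega) hb').1 h
    have hblow := ih _ (by simp at hn ⊢; omega) h' rfl
    rw [List.reverse_cons] at hblow
    simpa using hblow.concat_succ
  · obtain rfl : x = 2 := by have := h.2.2.1 x List.mem_cons_self; omega
    obtain rfl : y = 2 := by have := h.2.2.2.1 y List.mem_cons_self; omega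
    obtain ⟨rfl, rfl⟩ := h.eq_nil_of_two_cons
    exact .base

theorem complementary_iff_blowupPair (a b : List ℤ) :
    Complementary a b ↔ BlowupPair a b := by
  refine ⟨fun h => ?_, fun h => ?_⟩
  · simpa using h.reverse.blowupPair_reverse
  · simpa using h.complementary_reverse.reverse
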